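/- Let C be a coalgebra over a field K such that C ≅ Rat(C*_{C*}) as right C*-modules, where C carries the action c ↼ c* = Σ c*(c₁) c₂ and C* acts on itself by right multiplication. Let C = ⊕_{j∈J} E(T_j) be a decomposition of C as a direct sum of right C-comodules, where each E(T_j) is an injective envelope of a simple right C-comodule T_j, and set J₀ = {j ∈ J : Rat(E(T_j)*) ≠ 0}. Then C ≅ Rat(∏_{j∈J₀} E(T_j)*) as right C*-modules (equivalently, as left C-comodules), where ∏ denotes the direct product of the right C*-modules E(T_j)*. -/

import Mathlib

open TensorProduct LinearMap

namespace CoFrob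

universe u v w x y

variable (K : Type u) [Field K] (C : Type v) [AddCommGroup C] [Module K C] [Coalgebra K C]

/-- The convolution product on the dual of a coalgebra:
`(f * g)(c) = ∑ f(c₁) g(c₂)`. -/
noncomputable def conv (f g : Module.Dual K C) : Module.Dual K C :=
  ((TensorProduct.lid K K).toLinearMap ∘ₗ TensorProduct.map f g) ∘ₗ Coalgebra.comul (R := K)

variable {K C}

theorem conv_add_left (f f' g : Module.Dual K C) :
    conv K C (f + f') g = conv K C f g + conv K C f' g := by
  simp only [conv, TensorProduct.map_add_left, LinearMap.add_comp, LinearMap.comp_add]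

theorem conv_add_right (f g g' : Module.Dual K C) :
    conv K C f (g + g') = conv K C f g + conv K C f g' := by
  simp only [conv, TensorProduct.map_add_right, LinearMap.add_comp, LinearMap.comp_add]

theorem conv_smul_left (k : K) (f g : Module.Dual K C) :
    conv K C (k • f) g = k • conv K C f g := by
  simp only [conv, TensorProduct.map_smul_left, LinearMap.smul_comp, LinearMap.comp_smul]

theorem conv_smul_right (k : K) (f g : Module.Dual K C) :
    conv K C f (k • g) = k • conv K C f g := by
  simp only [conv, TensorProduct.map_smul_right, LinearMap.smul_comp, LinearMap.comp_smul]

theorem conv_counit_left (f : Module.Dual K C) :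
    conv K C (Coalgebra.counit (R := K)) f = f := by
  unfold conv
  rw [← LinearMap.lTensor_comp_rTensor (f := Coalgebra.counit (R := K) (A := C)) (g := f)]
  simp only [LinearMap.comp_assoc]
  rw [Coalgebra.rTensor_counit_comp_comul]
  ext c
  simp

theorem conv_counit_right (f : Module.Dual K C) :
    conv K C f (Coalgebra.counit (R := K)) = f := by
  unfold conv
  rw [← LinearMap.rTensor_comp_lTensor (f := f) (g := Coalgebra.counit (R := K) (A := C))]
  simp only [LinearMap.comp_assoc]
  rw [Coalgebra.lTensor_counit_comp_comul]
  ext c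
  simp

theorem conv_assoc (f g h : Module.Dual K C) :
    conv K C (conv K C f g) h = conv K C f (conv K C g h) := by
  unfold conv
  rw [← LinearMap.map_comp_rTensor, ← LinearMap.map_comp_lTensor]
  have key : (TensorProduct.lid K K).toLinearMap ∘ₗ
        TensorProduct.map ((TensorProduct.lid K K).toLinearMap ∘ₗ TensorProduct.map f g) h =
      ((TensorProduct.lid K K).toLinearMap ∘ₗ
          TensorProduct.map f ((TensorProduct.lid K K).toLinearMap ∘ₗ TensorProduct.map g h)) ∘ₗ
        (TensorProduct.assoc K C C C).toLinearMap := by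
    apply TensorProduct.ext_threefold
    intro a b c
    simp [mul_assoc]
  simp only [← LinearMap.comp_assoc]
  rw [key]
  simp only [LinearMap.comp_assoc]
  rw [Coalgebra.coassoc]


variable (K C)

/-- A right `C`-comodule structure on the `K`-vector space `M`. -/
structure RightComodStr (M : Type w) [AddCommGroup M] [Module K M] where
  ρ : M →ₗ[K] M ⊗[K] C
  coassoc : (TensorProduct.assoc K M C C).toLinearMap ∘ₗ ρ.rTensor C ∘ₗ ρ
      = (Coalgebra.comul (R := K)).lTensor M ∘ₗ ρ
  counit' : (TensorProduct.rid K M).toLinearMap ∘ₗ (Coalgebra.counit (R := K)).lTensor M ∘ₗ ρ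
      = LinearMap.id

/-- A left `C`-comodule structure on the `K`-vector space `M`. -/
structure LeftComodStr (M : Type w) [AddCommGroup M] [Module K M] where
  ρ : M →ₗ[K] C ⊗[K] M
  coassoc : (TensorProduct.assoc K C C M).toLinearMap ∘ₗ (Coalgebra.comul (R := K)).rTensor M ∘ₗ ρ
      = ρ.lTensor C ∘ₗ ρ
  counit' : (TensorProduct.lid K M).toLinearMap ∘ₗ (Coalgebra.counit (R := K)).rTensor M ∘ₗ ρ
      = LinearMap.id

variable {K C}
variable {M : Type w} [AddCommGroup M] [Module K M]

/-- The left action of the dual algebra `C*` on a right `C`-comodule: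
`f • m = ∑ f(m₁) m₀`. -/
noncomputable def RightComodStr.smul (ρ : RightComodStr K C M) (f : Module.Dual K C) :
    M →ₗ[K] M :=
  (TensorProduct.rid K M).toLinearMap ∘ₗ f.lTensor M ∘ₗ ρ.ρ

/-- The right action of the dual algebra `C*` on a left `C`-comodule:
`m • f = ∑ f(m₋₁) m₀`. -/
noncomputable def LeftComodStr.smul (ρ : LeftComodStr K C M) (f : Module.Dual K C) :
    M →ₗ[K] M :=
  (TensorProduct.lid K M).toLinearMap ∘ₗ f.rTensor M ∘ₗ ρ.ρ

theorem RightComodStr.smul_counit (ρ : RightComodStr K C M) :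
    ρ.smul (Coalgebra.counit (R := K)) = LinearMap.id :=
  ρ.counit'

theorem LeftComodStr.smul_counit (ρ : LeftComodStr K C M) :
    ρ.smul (Coalgebra.counit (R := K)) = LinearMap.id :=
  ρ.counit'

theorem RightComodStr.smul_add (ρ : RightComodStr K C M) (f g : Module.Dual K C) :
    ρ.smul (f + g) = ρ.smul f + ρ.smul g := by
  simp only [RightComodStr.smul, LinearMap.lTensor_add, LinearMap.add_comp, LinearMap.comp_add]

theorem LeftComodStr.smul_add (ρ : LeftComodStr K C M) (f g : Module.Dual K C) :
    ρ.smul (f + g) = ρ.smul f + ρ.smul g := by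
  simp only [LeftComodStr.smul, LinearMap.rTensor_add, LinearMap.add_comp, LinearMap.comp_add]

theorem RightComodStr.smul_smulK (ρ : RightComodStr K C M) (k : K) (f : Module.Dual K C) :
    ρ.smul (k • f) = k • ρ.smul f := by
  simp only [RightComodStr.smul, LinearMap.lTensor_smul, LinearMap.smul_comp, LinearMap.comp_smul]

theorem LeftComodStr.smul_smulK (ρ : LeftComodStr K C M) (k : K) (f : Module.Dual K C) :
    ρ.smul (k • f) = k • ρ.smul f := by
  simp only [LeftComodStr.smul, LinearMap.rTensor_smul, LinearMap.smul_comp, LinearMap.comp_smul]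

theorem RightComodStr.smul_conv (ρ : RightComodStr K C M) (f g : Module.Dual K C) :
    ρ.smul (conv K C f g) = ρ.smul f ∘ₗ ρ.smul g := by
  set X : C ⊗[K] C →ₗ[K] K :=
    (TensorProduct.lid K K).toLinearMap ∘ₗ TensorProduct.map f g with hX
  have key : (TensorProduct.rid K M).toLinearMap ∘ₗ X.lTensor M ∘ₗ
        (TensorProduct.assoc K M C C).toLinearMap =
      ((TensorProduct.rid K M).toLinearMap ∘ₗ f.lTensor M) ∘ₗ
        ((TensorProduct.rid K (M ⊗[K] C)).toLinearMap ∘ₗ g.lTensor (M ⊗[K] C)) := by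
    apply TensorProduct.ext_threefold
    intro m c c'
    simp [hX, smul_smul, mul_comm]
  have nat : ((TensorProduct.rid K (M ⊗[K] C)).toLinearMap ∘ₗ g.lTensor (M ⊗[K] C)) ∘ₗ
        ρ.ρ.rTensor C = ρ.ρ ∘ₗ (TensorProduct.rid K M).toLinearMap ∘ₗ g.lTensor M := by
    apply TensorProduct.ext'
    intro m c
    simp
  apply LinearMap.ext
  intro x
  have e1 : ρ.smul (conv K C f g) x
      = (TensorProduct.rid K M) (X.lTensor M
          ((Coalgebra.comul (R := K)).lTensor M (ρ.ρ x))) := by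
    simp only [RightComodStr.smul, LinearMap.comp_apply]
    rw [show conv K C f g = X ∘ₗ Coalgebra.comul (R := K) from rfl, LinearMap.lTensor_comp,
      LinearMap.comp_apply]
    rfl
  have e2 : (Coalgebra.comul (R := K)).lTensor M (ρ.ρ x)
      = (TensorProduct.assoc K M C C) ((ρ.ρ.rTensor C) (ρ.ρ x)) := by
    have h := LinearMap.congr_fun ρ.coassoc x
    simpa [LinearMap.comp_apply] using h.symm
  have e3 := LinearMap.congr_fun key ((ρ.ρ.rTensor C) (ρ.ρ x))
  have e4 := LinearMap.congr_fun nat (ρ.ρ x)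
  simp only [LinearMap.comp_apply, LinearEquiv.coe_coe] at e3 e4
  rw [e1, e2]
  rw [e3, e4]
  simp only [RightComodStr.smul, LinearMap.comp_apply, LinearEquiv.coe_coe]

theorem LeftComodStr.smul_conv (ρ : LeftComodStr K C M) (f g : Module.Dual K C) :
    ρ.smul (conv K C f g) = ρ.smul g ∘ₗ ρ.smul f := by
  set X : C ⊗[K] C →ₗ[K] K :=
    (TensorProduct.lid K K).toLinearMap ∘ₗ TensorProduct.map f g with hX
  have key : (TensorProduct.lid K M).toLinearMap ∘ₗ X.rTensor M =
      (((TensorProduct.lid K M).toLinearMap ∘ₗ g.rTensor M) ∘ₗ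
        ((TensorProduct.lid K (C ⊗[K] M)).toLinearMap ∘ₗ f.rTensor (C ⊗[K] M))) ∘ₗ
        (TensorProduct.assoc K C C M).toLinearMap := by
    apply TensorProduct.ext_threefold
    intro c c' m
    simp [hX, smul_smul, mul_comm]
  have nat : ((TensorProduct.lid K (C ⊗[K] M)).toLinearMap ∘ₗ f.rTensor (C ⊗[K] M)) ∘ₗ
        ρ.ρ.lTensor C = ρ.ρ ∘ₗ (TensorProduct.lid K M).toLinearMap ∘ₗ f.rTensor M := by
    apply TensorProduct.ext'
    intro c m
    simp
  apply LinearMap.ext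
  intro x
  have e1 : ρ.smul (conv K C f g) x
      = (TensorProduct.lid K M) (X.rTensor M
          ((Coalgebra.comul (R := K)).rTensor M (ρ.ρ x))) := by
    simp only [LeftComodStr.smul, LinearMap.comp_apply]
    rw [show conv K C f g = X ∘ₗ Coalgebra.comul (R := K) from rfl, LinearMap.rTensor_comp,
      LinearMap.comp_apply]
    rfl
  have e2 : (TensorProduct.assoc K C C M) ((Coalgebra.comul (R := K)).rTensor M (ρ.ρ x))
      = (ρ.ρ.lTensor C) (ρ.ρ x) := by
    have h := LinearMap.congr_fun ρ.coassoc x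
    simpa [LinearMap.comp_apply] using h
  have e3 := LinearMap.congr_fun key ((Coalgebra.comul (R := K)).rTensor M (ρ.ρ x))
  have e4 := LinearMap.congr_fun nat (ρ.ρ x)
  simp only [LinearMap.comp_apply, LinearEquiv.coe_coe] at e3 e4
  rw [e1, e3, e2, e4]
  simp only [LeftComodStr.smul, LinearMap.comp_apply, LinearEquiv.coe_coe]


/-! ### Morphisms of comodules, injective and projective comodules -/

/-- A morphism of right `C`-comodules. -/
def IsRightComodHom {M : Type w} [AddCommGroup M] [Module K M]
    {N : Type x} [AddCommGroup N] [Module K N]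
    (ρM : RightComodStr K C M) (ρN : RightComodStr K C N)
    (φ : M →ₗ[K] N) : Prop :=
  ρN.ρ ∘ₗ φ = φ.rTensor C ∘ₗ ρM.ρ

/-- A morphism of left `C`-comodules. -/
def IsLeftComodHom {M : Type w} [AddCommGroup M] [Module K M]
    {N : Type x} [AddCommGroup N] [Module K N]
    (ρM : LeftComodStr K C M) (ρN : LeftComodStr K C N)
    (φ : M →ₗ[K] N) : Prop :=
  ρN.ρ ∘ₗ φ = φ.lTensor C ∘ₗ ρM.ρ

/-- An injective object in the category of right `C`-comodules. -/
def RightComodStr.Injective {Q : Type w} [AddCommGroup Q] [Module K Q]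
    (ρQ : RightComodStr K C Q) : Prop :=
  ∀ (A B : Type x) [AddCommGroup A] [Module K A] [AddCommGroup B] [Module K B],
    ∀ (ρA : RightComodStr K C A) (ρB : RightComodStr K C B) (i : A →ₗ[K] B),
    Function.Injective i → IsRightComodHom ρA ρB i →
    ∀ φ : A →ₗ[K] Q, IsRightComodHom ρA ρQ φ →
    ∃ ψ : B →ₗ[K] Q, IsRightComodHom ρB ρQ ψ ∧ ψ ∘ₗ i = φ

/-- A projective object in the category of right `C`-comodules. -/
def RightComodStr.Projective {Q : Type w} [AddCommGroup Q] [Module K Q]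
    (ρQ : RightComodStr K C Q) : Prop :=
  ∀ (A B : Type x) [AddCommGroup A] [Module K A] [AddCommGroup B] [Module K B],
    ∀ (ρA : RightComodStr K C A) (ρB : RightComodStr K C B) (p : A →ₗ[K] B),
    Function.Surjective p → IsRightComodHom ρA ρB p →
    ∀ φ : Q →ₗ[K] B, IsRightComodHom ρQ ρB φ →
    ∃ ψ : Q →ₗ[K] A, IsRightComodHom ρQ ρA ψ ∧ p ∘ₗ ψ = φ

/-- An injective object in the category of left `C`-comodules. -/
def LeftComodStr.Injective {Q : Type w} [AddCommGroup Q] [Module K Q]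
    (ρQ : LeftComodStr K C Q) : Prop :=
  ∀ (A B : Type x) [AddCommGroup A] [Module K A] [AddCommGroup B] [Module K B],
    ∀ (ρA : LeftComodStr K C A) (ρB : LeftComodStr K C B) (i : A →ₗ[K] B),
    Function.Injective i → IsLeftComodHom ρA ρB i →
    ∀ φ : A →ₗ[K] Q, IsLeftComodHom ρA ρQ φ →
    ∃ ψ : B →ₗ[K] Q, IsLeftComodHom ρB ρQ ψ ∧ ψ ∘ₗ i = φ

/-- A projective object in the category of left `C`-comodules. -/
def LeftComodStr.Projective {Q : Type w} [AddCommGroup Q] [Module K Q]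
    (ρQ : LeftComodStr K C Q) : Prop :=
  ∀ (A B : Type x) [AddCommGroup A] [Module K A] [AddCommGroup B] [Module K B],
    ∀ (ρA : LeftComodStr K C A) (ρB : LeftComodStr K C B) (p : A →ₗ[K] B),
    Function.Surjective p → IsLeftComodHom ρA ρB p →
    ∀ φ : Q →ₗ[K] B, IsLeftComodHom ρQ ρB φ →
    ∃ ψ : Q →ₗ[K] A, IsLeftComodHom ρQ ρA ψ ∧ p ∘ₗ ψ = φ

/-! ### Subcomodules -/

/-- A `K`-subspace `s` of a right `C`-comodule `M` is a subcomodule if the coaction maps `s`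
into `s ⊗ C ⊆ M ⊗ C`. -/
def RightComodStr.IsSubcomod (ρ : RightComodStr K C M) (s : Submodule K M) : Prop :=
  ∀ x ∈ s, ρ.ρ x ∈ LinearMap.range (s.subtype.rTensor C)

/-- A `K`-subspace `s` of a left `C`-comodule `M` is a subcomodule if the coaction maps `s`
into `C ⊗ s ⊆ C ⊗ M`. -/
def LeftComodStr.IsSubcomod (ρ : LeftComodStr K C M) (s : Submodule K M) : Prop :=
  ∀ x ∈ s, ρ.ρ x ∈ LinearMap.range (s.subtype.lTensor C)

theorem RightComodStr.IsSubcomod.smul_mem {ρ : RightComodStr K C M} {s : Submodule K M}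
    (h : ρ.IsSubcomod s) (f : Module.Dual K C) {x : M} (hx : x ∈ s) : ρ.smul f x ∈ s := by
  obtain ⟨u, hu⟩ := h x hx
  have h1 : ρ.smul f x = (TensorProduct.rid K M) ((f.lTensor M) ((s.subtype.rTensor C) u)) := by
    simp only [RightComodStr.smul, LinearMap.comp_apply, hu]
    rfl
  have h2 : (f.lTensor M) ((s.subtype.rTensor C) u) = (s.subtype.rTensor K) ((f.lTensor ↥s) u) := by
    rw [← LinearMap.comp_apply, ← LinearMap.comp_apply, LinearMap.lTensor_comp_rTensor,
      LinearMap.rTensor_comp_lTensor]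
  have hnat : (TensorProduct.rid K M).toLinearMap ∘ₗ s.subtype.rTensor K
      = s.subtype ∘ₗ (TensorProduct.rid K ↥s).toLinearMap := by
    apply TensorProduct.ext'
    intro y k
    simp
  have h3 := LinearMap.congr_fun hnat ((f.lTensor ↥s) u)
  simp only [LinearMap.comp_apply, LinearEquiv.coe_coe] at h3
  rw [h1, h2, h3]
  exact Submodule.coe_mem _

theorem LeftComodStr.IsSubcomod.smul_mem {ρ : LeftComodStr K C M} {s : Submodule K M}
    (h : ρ.IsSubcomod s) (f : Module.Dual K C) {x : M} (hx : x ∈ s) : ρ.smul f x ∈ s := by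
  obtain ⟨u, hu⟩ := h x hx
  have h1 : ρ.smul f x = (TensorProduct.lid K M) ((f.rTensor M) ((s.subtype.lTensor C) u)) := by
    simp only [LeftComodStr.smul, LinearMap.comp_apply, hu]
    rfl
  have h2 : (f.rTensor M) ((s.subtype.lTensor C) u) = (s.subtype.lTensor K) ((f.rTensor ↥s) u) := by
    rw [← LinearMap.comp_apply, ← LinearMap.comp_apply, LinearMap.rTensor_comp_lTensor,
      LinearMap.lTensor_comp_rTensor]
  have hnat : (TensorProduct.lid K M).toLinearMap ∘ₗ s.subtype.lTensor K
      = s.subtype ∘ₗ (TensorProduct.lid K ↥s).toLinearMap := by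
    apply TensorProduct.ext'
    intro k y
    simp
  have h3 := LinearMap.congr_fun hnat ((f.rTensor ↥s) u)
  simp only [LinearMap.comp_apply, LinearEquiv.coe_coe] at h3
  rw [h1, h2, h3]
  exact Submodule.coe_mem _

/-- The action of `C*` on a subcomodule of a right comodule, by restriction. -/
noncomputable def RightComodStr.subSmul (ρ : RightComodStr K C M) {s : Submodule K M}
    (h : ρ.IsSubcomod s) (f : Module.Dual K C) : ↥s →ₗ[K] ↥s :=
  (ρ.smul f).restrict fun x hx => h.smul_mem f hx

/-- The action of `C*` on a subcomodule of a left comodule, by restriction. -/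
noncomputable def LeftComodStr.subSmul (ρ : LeftComodStr K C M) {s : Submodule K M}
    (h : ρ.IsSubcomod s) (f : Module.Dual K C) : ↥s →ₗ[K] ↥s :=
  (ρ.smul f).restrict fun x hx => h.smul_mem f hx

/-! ### Simple comodules, essential extensions, injective envelopes -/

/-- A simple right `C`-comodule: nonzero, with no nontrivial subcomodules. -/
def RightComodStr.IsSimple (ρ : RightComodStr K C M) : Prop :=
  (⊥ : Submodule K M) ≠ ⊤ ∧ ∀ s : Submodule K M, ρ.IsSubcomod s → s = ⊥ ∨ s = ⊤

/-- A simple left `C`-comodule: nonzero, with no nontrivial subcomodules. -/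
def LeftComodStr.IsSimple (ρ : LeftComodStr K C M) : Prop :=
  (⊥ : Submodule K M) ≠ ⊤ ∧ ∀ s : Submodule K M, ρ.IsSubcomod s → s = ⊥ ∨ s = ⊤

/-- A subcomodule which is a simple comodule. -/
def RightComodStr.IsSimpleSubcomod (ρ : RightComodStr K C M) (S : Submodule K M) : Prop :=
  ρ.IsSubcomod S ∧ S ≠ ⊥ ∧ ∀ t : Submodule K M, ρ.IsSubcomod t → t ≤ S → t = ⊥ ∨ t = S

/-- A subcomodule which is a simple comodule. -/
def LeftComodStr.IsSimpleSubcomod (ρ : LeftComodStr K C M) (S : Submodule K M) : Prop :=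
  ρ.IsSubcomod S ∧ S ≠ ⊥ ∧ ∀ t : Submodule K M, ρ.IsSubcomod t → t ≤ S → t = ⊥ ∨ t = S

/-- A subcomodule `E` of a right comodule `M` which is injective as a comodule in its own
right; this is expressed via the extension property for morphisms with values in `E`. -/
def RightComodStr.IsInjectiveSubcomod (ρ : RightComodStr K C M) (E : Submodule K M) : Prop :=
  ρ.IsSubcomod E ∧
  ∀ (A B : Type x) [AddCommGroup A] [Module K A] [AddCommGroup B] [Module K B],
    ∀ (ρA : RightComodStr K C A) (ρB : RightComodStr K C B) (i : A →ₗ[K] B),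
    Function.Injective i → IsRightComodHom ρA ρB i →
    ∀ φ : A →ₗ[K] M, IsRightComodHom ρA ρ φ → LinearMap.range φ ≤ E →
    ∃ ψ : B →ₗ[K] M, IsRightComodHom ρB ρ ψ ∧ LinearMap.range ψ ≤ E ∧ ψ ∘ₗ i = φ

/-- A subcomodule `E` of a left comodule `M` which is injective as a comodule. -/
def LeftComodStr.IsInjectiveSubcomod (ρ : LeftComodStr K C M) (E : Submodule K M) : Prop :=
  ρ.IsSubcomod E ∧
  ∀ (A B : Type x) [AddCommGroup A] [Module K A] [AddCommGroup B] [Module K B],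
    ∀ (ρA : LeftComodStr K C A) (ρB : LeftComodStr K C B) (i : A →ₗ[K] B),
    Function.Injective i → IsLeftComodHom ρA ρB i →
    ∀ φ : A →ₗ[K] M, IsLeftComodHom ρA ρ φ → LinearMap.range φ ≤ E →
    ∃ ψ : B →ₗ[K] M, IsLeftComodHom ρB ρ ψ ∧ LinearMap.range ψ ≤ E ∧ ψ ∘ₗ i = φ

/-- `E` is an injective envelope, inside the comodule `M`, of the subcomodule `S`:
`E` is an injective subcomodule containing `S` as an essential subcomodule. -/
def RightComodStr.IsInjEnvSubcomod (ρ : RightComodStr K C M) (S E : Submodule K M) : Prop :=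
  S ≤ E ∧ RightComodStr.IsInjectiveSubcomod.{u, v, w, x} ρ E ∧
    ∀ t : Submodule K M, ρ.IsSubcomod t → t ≤ E → t ≠ ⊥ → S ⊓ t ≠ ⊥

/-- `E` is an injective envelope, inside the comodule `M`, of the subcomodule `S`. -/
def LeftComodStr.IsInjEnvSubcomod (ρ : LeftComodStr K C M) (S E : Submodule K M) : Prop :=
  S ≤ E ∧ LeftComodStr.IsInjectiveSubcomod.{u, v, w, x} ρ E ∧
    ∀ t : Submodule K M, ρ.IsSubcomod t → t ≤ E → t ≠ ⊥ → S ⊓ t ≠ ⊥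

/-- `ι : T → E` realizes the (abstract) right comodule `E` as an injective envelope of the
right comodule `T`: `ι` is an injective morphism of comodules, `E` is injective, and the
image of `ι` is essential in `E`. -/
def IsRightInjEnv {T : Type w} [AddCommGroup T] [Module K T]
    {E : Type x} [AddCommGroup E] [Module K E]
    (ρT : RightComodStr K C T) (ρE : RightComodStr K C E) (ι : T →ₗ[K] E) : Prop :=
  IsRightComodHom ρT ρE ι ∧ Function.Injective ι ∧ RightComodStr.Injective.{u, v, x, y} ρE ∧
    ∀ t : Submodule K E, ρE.IsSubcomod t → t ≠ ⊥ → t ⊓ LinearMap.range ι ≠ ⊥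

/-- `ι : T → E` realizes the left comodule `E` as an injective envelope of `T`. -/
def IsLeftInjEnv {T : Type w} [AddCommGroup T] [Module K T]
    {E : Type x} [AddCommGroup E] [Module K E]
    (ρT : LeftComodStr K C T) (ρE : LeftComodStr K C E) (ι : T →ₗ[K] E) : Prop :=
  IsLeftComodHom ρT ρE ι ∧ Function.Injective ι ∧ LeftComodStr.Injective.{u, v, x, y} ρE ∧
    ∀ t : Submodule K E, ρE.IsSubcomod t → t ≠ ⊥ → t ⊓ LinearMap.range ι ≠ ⊥

/-- An indecomposable right comodule: nonzero and not the direct sum of two nonzero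
subcomodules. -/
def RightComodStr.Indecomposable (ρ : RightComodStr K C M) : Prop :=
  (⊥ : Submodule K M) ≠ ⊤ ∧
    ¬∃ s t : Submodule K M, ρ.IsSubcomod s ∧ ρ.IsSubcomod t ∧
      s ⊓ t = ⊥ ∧ s ⊔ t = ⊤ ∧ s ≠ ⊥ ∧ t ≠ ⊥

/-! ### The regular comodule structures on `C` -/

variable (K C)

/-- `C` as a right comodule over itself, via the comultiplication. -/
noncomputable def Cright : RightComodStr K C C where
  ρ := Coalgebra.comul (R := K)
  coassoc := Coalgebra.coassoc
  counit' := by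
    rw [Coalgebra.lTensor_counit_comp_comul]
    apply LinearMap.ext
    intro c
    simp

/-- `C` as a left comodule over itself, via the comultiplication. -/
noncomputable def Cleft : LeftComodStr K C C where
  ρ := Coalgebra.comul (R := K)
  coassoc := Coalgebra.coassoc
  counit' := by
    rw [Coalgebra.rTensor_counit_comp_comul]
    apply LinearMap.ext
    intro c
    simp

variable {K C}

/-! ### Modules over the dual algebra `C*` -/

variable (K C)

/-- A left module structure over the convolution algebra `C*` on the `K`-vector space `N`
(with compatible `K`-structure). -/
structure LeftModStr (N : Type w) [AddCommGroup N] [Module K N] where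
  act : Module.Dual K C → N →ₗ[K] N
  act_add : ∀ f g, act (f + g) = act f + act g
  act_smulK : ∀ (k : K) f, act (k • f) = k • act f
  act_conv : ∀ f g, act (conv K C f g) = act f ∘ₗ act g
  act_counit : act (Coalgebra.counit (R := K)) = LinearMap.id

/-- A right module structure over the convolution algebra `C*` on the `K`-vector space `N`
(with compatible `K`-structure); `act f n` denotes `n · f`. -/
structure RightModStr (N : Type w) [AddCommGroup N] [Module K N] where
  act : Module.Dual K C → N →ₗ[K] N
  act_add : ∀ f g, act (f + g) = act f + act g
  act_smulK : ∀ (k : K) f, act (k • f) = k • act f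
  act_conv : ∀ f g, act (conv K C f g) = act g ∘ₗ act f
  act_counit : act (Coalgebra.counit (R := K)) = LinearMap.id

variable {K C}

/-- A morphism of left `C*`-modules. -/
def IsLeftModHom {N : Type w} [AddCommGroup N] [Module K N]
    {N' : Type x} [AddCommGroup N'] [Module K N']
    (S : LeftModStr K C N) (S' : LeftModStr K C N') (φ : N →ₗ[K] N') : Prop :=
  ∀ f, φ ∘ₗ S.act f = S'.act f ∘ₗ φ

/-- A morphism of right `C*`-modules. -/
def IsRightModHom {N : Type w} [AddCommGroup N] [Module K N]
    {N' : Type x} [AddCommGroup N'] [Module K N']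
    (S : RightModStr K C N) (S' : RightModStr K C N') (φ : N →ₗ[K] N') : Prop :=
  ∀ f, φ ∘ₗ S.act f = S'.act f ∘ₗ φ

/-- An injective left `C*`-module. -/
def LeftModStr.Injective {Q : Type w} [AddCommGroup Q] [Module K Q]
    (SQ : LeftModStr K C Q) : Prop :=
  ∀ (A B : Type x) [AddCommGroup A] [Module K A] [AddCommGroup B] [Module K B],
    ∀ (SA : LeftModStr K C A) (SB : LeftModStr K C B) (i : A →ₗ[K] B),
    Function.Injective i → IsLeftModHom SA SB i →
    ∀ φ : A →ₗ[K] Q, IsLeftModHom SA SQ φ →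
    ∃ ψ : B →ₗ[K] Q, IsLeftModHom SB SQ ψ ∧ ψ ∘ₗ i = φ

/-- A projective left `C*`-module. -/
def LeftModStr.Projective {Q : Type w} [AddCommGroup Q] [Module K Q]
    (SQ : LeftModStr K C Q) : Prop :=
  ∀ (A B : Type x) [AddCommGroup A] [Module K A] [AddCommGroup B] [Module K B],
    ∀ (SA : LeftModStr K C A) (SB : LeftModStr K C B) (p : A →ₗ[K] B),
    Function.Surjective p → IsLeftModHom SA SB p →
    ∀ φ : Q →ₗ[K] B, IsLeftModHom SQ SB φ →
    ∃ ψ : Q →ₗ[K] A, IsLeftModHom SQ SA ψ ∧ p ∘ₗ ψ = φ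

/-- A submodule stable under the `C*`-action, i.e. a `C*`-submodule. -/
def LeftModStr.IsStableSub {N : Type w} [AddCommGroup N] [Module K N]
    (S : LeftModStr K C N) (P : Submodule K N) : Prop :=
  ∀ f, ∀ n ∈ P, S.act f n ∈ P

/-- A submodule stable under the `C*`-action, i.e. a `C*`-submodule. -/
def RightModStr.IsStableSub {N : Type w} [AddCommGroup N] [Module K N]
    (S : RightModStr K C N) (P : Submodule K N) : Prop :=
  ∀ f, ∀ n ∈ P, S.act f n ∈ P

/-- An indecomposable left `C*`-module: nonzero, and not a direct sum of two nonzero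
`C*`-submodules. -/
def LeftModStr.Indecomposable {N : Type w} [AddCommGroup N] [Module K N]
    (S : LeftModStr K C N) : Prop :=
  (⊥ : Submodule K N) ≠ ⊤ ∧
    ¬∃ P Q : Submodule K N, S.IsStableSub P ∧ S.IsStableSub Q ∧
      P ⊓ Q = ⊥ ∧ P ⊔ Q = ⊤ ∧ P ≠ ⊥ ∧ Q ≠ ⊥

/-- The left `C*`-module structure induced on a right `C`-comodule. -/
noncomputable def RightComodStr.toLeftModStr {M : Type w} [AddCommGroup M] [Module K M]
    (ρ : RightComodStr K C M) : LeftModStr K C M where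
  act := ρ.smul
  act_add := ρ.smul_add
  act_smulK := ρ.smul_smulK
  act_conv := ρ.smul_conv
  act_counit := ρ.smul_counit

/-- The right `C*`-module structure induced on a left `C`-comodule. -/
noncomputable def LeftComodStr.toRightModStr {M : Type w} [AddCommGroup M] [Module K M]
    (ρ : LeftComodStr K C M) : RightModStr K C M where
  act := ρ.smul
  act_add := ρ.smul_add
  act_smulK := ρ.smul_smulK
  act_conv := ρ.smul_conv
  act_counit := ρ.smul_counit

/-- The right `C*`-module structure on the dual of a right `C`-comodule:
`(α · f)(m) = α(f · m)`. -/
noncomputable def RightComodStr.dualModStr {M : Type w} [AddCommGroup M] [Module K M]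
    (ρ : RightComodStr K C M) : RightModStr K C (Module.Dual K M) where
  act f := (ρ.smul f).dualMap
  act_add f g := by
    apply LinearMap.ext; intro α; apply LinearMap.ext; intro m
    simp [ρ.smul_add]
  act_smulK k f := by
    apply LinearMap.ext; intro α; apply LinearMap.ext; intro m
    simp [ρ.smul_smulK]
  act_conv f g := by
    apply LinearMap.ext; intro α; apply LinearMap.ext; intro m
    simp [ρ.smul_conv]
  act_counit := by
    apply LinearMap.ext; intro α; apply LinearMap.ext; intro m
    simp [ρ.smul_counit]

/-- The left `C*`-module structure on the dual of a left `C`-comodule: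
`(f · α)(m) = α(m · f)`. -/
noncomputable def LeftComodStr.dualModStr {M : Type w} [AddCommGroup M] [Module K M]
    (ρ : LeftComodStr K C M) : LeftModStr K C (Module.Dual K M) where
  act f := (ρ.smul f).dualMap
  act_add f g := by
    apply LinearMap.ext; intro α; apply LinearMap.ext; intro m
    simp [ρ.smul_add]
  act_smulK k f := by
    apply LinearMap.ext; intro α; apply LinearMap.ext; intro m
    simp [ρ.smul_smulK]
  act_conv f g := by
    apply LinearMap.ext; intro α; apply LinearMap.ext; intro m
    simp [ρ.smul_conv]
  act_counit := by
    apply LinearMap.ext; intro α; apply LinearMap.ext; intro m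
    simp [ρ.smul_counit]

theorem RightComodStr.subSmul_apply_coe {M : Type w} [AddCommGroup M] [Module K M]
    (ρ : RightComodStr K C M) {s : Submodule K M} (h : ρ.IsSubcomod s)
    (f : Module.Dual K C) (x : ↥s) : (ρ.subSmul h f x : M) = ρ.smul f (x : M) :=
  rfl

theorem RightComodStr.subSmul_add {M : Type w} [AddCommGroup M] [Module K M]
    (ρ : RightComodStr K C M) {s : Submodule K M} (h : ρ.IsSubcomod s)
    (f g : Module.Dual K C) : ρ.subSmul h (f + g) = ρ.subSmul h f + ρ.subSmul h g := by
  apply LinearMap.ext; intro x; apply Subtype.ext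
  have hx := LinearMap.congr_fun (ρ.smul_add f g) (x : M)
  simpa [RightComodStr.subSmul] using hx

theorem RightComodStr.subSmul_smulK {M : Type w} [AddCommGroup M] [Module K M]
    (ρ : RightComodStr K C M) {s : Submodule K M} (h : ρ.IsSubcomod s)
    (k : K) (f : Module.Dual K C) : ρ.subSmul h (k • f) = k • ρ.subSmul h f := by
  apply LinearMap.ext; intro x; apply Subtype.ext
  have hx := LinearMap.congr_fun (ρ.smul_smulK k f) (x : M)
  simpa [RightComodStr.subSmul] using hx

theorem RightComodStr.subSmul_conv {M : Type w} [AddCommGroup M] [Module K M]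
    (ρ : RightComodStr K C M) {s : Submodule K M} (h : ρ.IsSubcomod s)
    (f g : Module.Dual K C) :
    ρ.subSmul h (conv K C f g) = ρ.subSmul h f ∘ₗ ρ.subSmul h g := by
  apply LinearMap.ext; intro x; apply Subtype.ext
  have hx := LinearMap.congr_fun (ρ.smul_conv f g) (x : M)
  simpa [RightComodStr.subSmul] using hx

theorem RightComodStr.subSmul_counit {M : Type w} [AddCommGroup M] [Module K M]
    (ρ : RightComodStr K C M) {s : Submodule K M} (h : ρ.IsSubcomod s) :
    ρ.subSmul h (Coalgebra.counit (R := K)) = LinearMap.id := by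
  apply LinearMap.ext; intro x; apply Subtype.ext
  have hx := LinearMap.congr_fun ρ.smul_counit (x : M)
  simpa [RightComodStr.subSmul] using hx

theorem LeftComodStr.subSmul_apply_coe {M : Type w} [AddCommGroup M] [Module K M]
    (ρ : LeftComodStr K C M) {s : Submodule K M} (h : ρ.IsSubcomod s)
    (f : Module.Dual K C) (x : ↥s) : (ρ.subSmul h f x : M) = ρ.smul f (x : M) :=
  rfl

theorem LeftComodStr.subSmul_add {M : Type w} [AddCommGroup M] [Module K M]
    (ρ : LeftComodStr K C M) {s : Submodule K M} (h : ρ.IsSubcomod s)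
    (f g : Module.Dual K C) : ρ.subSmul h (f + g) = ρ.subSmul h f + ρ.subSmul h g := by
  apply LinearMap.ext; intro x; apply Subtype.ext
  have hx := LinearMap.congr_fun (ρ.smul_add f g) (x : M)
  simpa [LeftComodStr.subSmul] using hx

theorem LeftComodStr.subSmul_smulK {M : Type w} [AddCommGroup M] [Module K M]
    (ρ : LeftComodStr K C M) {s : Submodule K M} (h : ρ.IsSubcomod s)
    (k : K) (f : Module.Dual K C) : ρ.subSmul h (k • f) = k • ρ.subSmul h f := by
  apply LinearMap.ext; intro x; apply Subtype.ext
  have hx := LinearMap.congr_fun (ρ.smul_smulK k f) (x : M)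
  simpa [LeftComodStr.subSmul] using hx

theorem LeftComodStr.subSmul_conv {M : Type w} [AddCommGroup M] [Module K M]
    (ρ : LeftComodStr K C M) {s : Submodule K M} (h : ρ.IsSubcomod s)
    (f g : Module.Dual K C) :
    ρ.subSmul h (conv K C f g) = ρ.subSmul h g ∘ₗ ρ.subSmul h f := by
  apply LinearMap.ext; intro x; apply Subtype.ext
  have hx := LinearMap.congr_fun (ρ.smul_conv f g) (x : M)
  simpa [LeftComodStr.subSmul] using hx

theorem LeftComodStr.subSmul_counit {M : Type w} [AddCommGroup M] [Module K M]
    (ρ : LeftComodStr K C M) {s : Submodule K M} (h : ρ.IsSubcomod s) :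
    ρ.subSmul h (Coalgebra.counit (R := K)) = LinearMap.id := by
  apply LinearMap.ext; intro x; apply Subtype.ext
  have hx := LinearMap.congr_fun ρ.smul_counit (x : M)
  simpa [LeftComodStr.subSmul] using hx

/-- The right `C*`-module structure on the dual of a right subcomodule of a right comodule:
`(α · f)(m) = α(f · m)`. -/
noncomputable def RightComodStr.subDualModStr {M : Type w} [AddCommGroup M] [Module K M]
    (ρ : RightComodStr K C M) {s : Submodule K M} (h : ρ.IsSubcomod s) :
    RightModStr K C (Module.Dual K ↥s) where
  act f := (ρ.subSmul h f).dualMap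
  act_add f g := by
    rw [ρ.subSmul_add h f g]
    apply LinearMap.ext; intro α; apply LinearMap.ext; intro m
    simp
  act_smulK k f := by
    rw [ρ.subSmul_smulK h k f]
    apply LinearMap.ext; intro α; apply LinearMap.ext; intro m
    simp
  act_conv f g := by
    rw [ρ.subSmul_conv h f g]
    apply LinearMap.ext; intro α; apply LinearMap.ext; intro m
    simp
  act_counit := by
    rw [ρ.subSmul_counit h]
    apply LinearMap.ext; intro α; apply LinearMap.ext; intro m
    simp

/-- The left `C*`-module structure on the dual of a left subcomodule of a left comodule:
`(f · α)(m) = α(m · f)`. -/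
noncomputable def LeftComodStr.subDualModStr {M : Type w} [AddCommGroup M] [Module K M]
    (ρ : LeftComodStr K C M) {s : Submodule K M} (h : ρ.IsSubcomod s) :
    LeftModStr K C (Module.Dual K ↥s) where
  act f := (ρ.subSmul h f).dualMap
  act_add f g := by
    rw [ρ.subSmul_add h f g]
    apply LinearMap.ext; intro α; apply LinearMap.ext; intro m
    simp
  act_smulK k f := by
    rw [ρ.subSmul_smulK h k f]
    apply LinearMap.ext; intro α; apply LinearMap.ext; intro m
    simp
  act_conv f g := by
    rw [ρ.subSmul_conv h f g]
    apply LinearMap.ext; intro α; apply LinearMap.ext; intro m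
    simp
  act_counit := by
    rw [ρ.subSmul_counit h]
    apply LinearMap.ext; intro α; apply LinearMap.ext; intro m
    simp

/-! ### The regular `C*`-module structures on `C*`, and rational modules -/

variable (K C)

/-- Left multiplication in the convolution algebra `C*`, as a linear map. -/
noncomputable def lmulDual (f : Module.Dual K C) : Module.Dual K C →ₗ[K] Module.Dual K C where
  toFun g := conv K C f g
  map_add' g g' := conv_add_right f g g'
  map_smul' k g := conv_smul_right k f g

/-- Right multiplication in the convolution algebra `C*`, as a linear map. -/
noncomputable def rmulDual (f : Module.Dual K C) : Module.Dual K C →ₗ[K] Module.Dual K C where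
  toFun g := conv K C g f
  map_add' g g' := conv_add_left g g' f
  map_smul' k g := conv_smul_left k g f

/-- `C*` as a left module over itself (by left convolution multiplication). -/
noncomputable def dualLeftReg : LeftModStr K C (Module.Dual K C) where
  act := lmulDual K C
  act_add f g := by
    apply LinearMap.ext; intro h
    simp [lmulDual, conv_add_left]
  act_smulK k f := by
    apply LinearMap.ext; intro h
    simp [lmulDual, conv_smul_left]
  act_conv f g := by
    apply LinearMap.ext; intro h
    simp [lmulDual, conv_assoc]
  act_counit := by
    apply LinearMap.ext; intro h
    simp [lmulDual, conv_counit_left]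

/-- `C*` as a right module over itself (by right convolution multiplication). -/
noncomputable def dualRightReg : RightModStr K C (Module.Dual K C) where
  act := rmulDual K C
  act_add f g := by
    apply LinearMap.ext; intro h
    simp [rmulDual, conv_add_right]
  act_smulK k f := by
    apply LinearMap.ext; intro h
    simp [rmulDual, conv_smul_right]
  act_conv f g := by
    apply LinearMap.ext; intro h
    simp [rmulDual, conv_assoc]
  act_counit := by
    apply LinearMap.ext; intro h
    simp [rmulDual, conv_counit_right]

variable {K C}

/-- A rational submodule of a left `C*`-module: a stable subspace on which the action comes
from a right `C`-comodule structure. -/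
def LeftModStr.IsRationalSub {N : Type w} [AddCommGroup N] [Module K N]
    (S : LeftModStr K C N) (P : Submodule K N) : Prop :=
  S.IsStableSub P ∧
    ∃ ρ : RightComodStr K C ↥P, ∀ (f : Module.Dual K C) (p : ↥P),
      (ρ.smul f p : N) = S.act f (p : N)

/-- A rational submodule of a right `C*`-module: a stable subspace on which the action comes
from a left `C`-comodule structure. -/
def RightModStr.IsRationalSub {N : Type w} [AddCommGroup N] [Module K N]
    (S : RightModStr K C N) (P : Submodule K N) : Prop :=
  S.IsStableSub P ∧
    ∃ ρ : LeftComodStr K C ↥P, ∀ (f : Module.Dual K C) (p : ↥P),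
      (ρ.smul f p : N) = S.act f (p : N)

/-- The rational part `Rat(N)` of a left `C*`-module `N`: the largest rational submodule,
i.e. the sum of all rational submodules. -/
def LeftModStr.rat {N : Type w} [AddCommGroup N] [Module K N]
    (S : LeftModStr K C N) : Submodule K N :=
  sSup {P | S.IsRationalSub P}

/-- The rational part `Rat(N)` of a right `C*`-module `N`: the largest rational submodule,
i.e. the sum of all rational submodules. -/
def RightModStr.rat {N : Type w} [AddCommGroup N] [Module K N]
    (S : RightModStr K C N) : Submodule K N :=
  sSup {P | S.IsRationalSub P}

/-! ### Co-Frobenius coalgebras -/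

variable (K C)

/-- `C` is a right co-Frobenius coalgebra: there is an injective morphism of right
`C*`-modules from `C` (with the action `c ↼ f = ∑ f(c₁) c₂`) into `C*`. -/
def IsRightCoFrobenius : Prop :=
  ∃ φ : C →ₗ[K] Module.Dual K C, Function.Injective φ ∧
    ∀ (f : Module.Dual K C) (c : C), φ ((Cleft K C).smul f c) = conv K C (φ c) f

/-- `C` is a left co-Frobenius coalgebra: there is an injective morphism of left
`C*`-modules from `C` (with the action `f ⇀ c = ∑ f(c₂) c₁`) into `C*`. -/
def IsLeftCoFrobenius : Prop :=
  ∃ φ : C →ₗ[K] Module.Dual K C, Function.Injective φ ∧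
    ∀ (f : Module.Dual K C) (c : C), φ ((Cright K C).smul f c) = conv K C f (φ c)

/-- `C` is co-Frobenius if it is both left and right co-Frobenius. -/
def IsCoFrobenius : Prop := IsLeftCoFrobenius K C ∧ IsRightCoFrobenius K C

/-- `C` is right semiperfect: every finite-dimensional right `C`-comodule has a projective
cover in the category of right `C`-comodules. -/
def IsRightSemiperfect : Prop :=
  ∀ (M : Type x) [AddCommGroup M] [Module K M],
    ∀ (ρM : RightComodStr K C M), FiniteDimensional K M →
    ∃ (P : Type x) (_ : AddCommGroup P) (_ : Module K P),
    ∃ (ρP : RightComodStr K C P) (π : P →ₗ[K] M),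
      RightComodStr.Projective.{u, v, x, y} ρP ∧ IsRightComodHom ρP ρM π ∧
      Function.Surjective π ∧
      ∀ s : Submodule K P, ρP.IsSubcomod s → s ⊔ LinearMap.ker π = ⊤ → s = ⊤

/-- `C` is left semiperfect: every finite-dimensional left `C`-comodule has a projective
cover in the category of left `C`-comodules. -/
def IsLeftSemiperfect : Prop :=
  ∀ (M : Type x) [AddCommGroup M] [Module K M],
    ∀ (ρM : LeftComodStr K C M), FiniteDimensional K M →
    ∃ (P : Type x) (_ : AddCommGroup P) (_ : Module K P),
    ∃ (ρP : LeftComodStr K C P) (π : P →ₗ[K] M),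
      LeftComodStr.Projective.{u, v, x, y} ρP ∧ IsLeftComodHom ρP ρM π ∧
      Function.Surjective π ∧
      ∀ s : Submodule K P, ρP.IsSubcomod s → s ⊔ LinearMap.ker π = ⊤ → s = ⊤

variable {K C}

/-! ### Products of `C*`-modules -/

/-- The product of a family of left `C*`-modules. -/
noncomputable def piLeftModStr {ι : Type y} {N : ι → Type x} [∀ i, AddCommGroup (N i)]
    [∀ i, Module K (N i)] (S : ∀ i, LeftModStr K C (N i)) : LeftModStr K C (∀ i, N i) where
  act f := LinearMap.pi fun i => (S i).act f ∘ₗ LinearMap.proj i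
  act_add f g := by
    apply LinearMap.ext; intro n; funext i
    simp [(S i).act_add]
  act_smulK k f := by
    apply LinearMap.ext; intro n; funext i
    simp [(S i).act_smulK]
  act_conv f g := by
    apply LinearMap.ext; intro n; funext i
    simp [(S i).act_conv]
  act_counit := by
    apply LinearMap.ext; intro n; funext i
    simp [(S i).act_counit]

/-- The product of a family of right `C*`-modules. -/
noncomputable def piRightModStr {ι : Type y} {N : ι → Type x} [∀ i, AddCommGroup (N i)]
    [∀ i, Module K (N i)] (S : ∀ i, RightModStr K C (N i)) : RightModStr K C (∀ i, N i) where
  act f := LinearMap.pi fun i => (S i).act f ∘ₗ LinearMap.proj i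
  act_add f g := by
    apply LinearMap.ext; intro n; funext i
    simp [(S i).act_add]
  act_smulK k f := by
    apply LinearMap.ext; intro n; funext i
    simp [(S i).act_smulK]
  act_conv f g := by
    apply LinearMap.ext; intro n; funext i
    simp [(S i).act_conv]
  act_counit := by
    apply LinearMap.ext; intro n; funext i
    simp [(S i).act_counit]

/-- The submodule of finitely supported families inside a product: this is the direct sum
`⊕ᵢ Nᵢ` inside `∏ᵢ Nᵢ`. -/
def finSupportSub {ι : Type y} (N : ι → Type x) [∀ i, AddCommGroup (N i)]
    [∀ i, Module K (N i)] : Submodule K (∀ i, N i) where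
  carrier := {x | {i | x i ≠ 0}.Finite}
  add_mem' := by
    intro a b ha hb
    refine (Set.Finite.union ha hb).subset ?_
    intro i hi
    simp only [Set.mem_setOf_eq, Set.mem_union, Pi.add_apply] at *
    by_contra hcon
    push_neg at hcon
    exact hi (by rw [hcon.1, hcon.2, add_zero])
  zero_mem' := by
    simp only [Set.mem_setOf_eq, Pi.zero_apply, ne_eq, not_true_eq_false]
    simpa using Set.finite_empty
  smul_mem' := by
    intro c a ha
    refine ha.subset ?_
    intro i hi
    simp only [Set.mem_setOf_eq, Pi.smul_apply] at *
    intro hzero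
    exact hi (by rw [hzero, smul_zero])

/-- The space `Hom_{C*}(M, C*)` of left `C*`-module morphisms from a right `C`-comodule `M`
to `C*` (with left regular action), as a `K`-subspace of `Hom_K(M, C*)`. -/
def cstarHomSub {M : Type w} [AddCommGroup M] [Module K M]
    (ρM : RightComodStr K C M) : Submodule K (M →ₗ[K] Module.Dual K C) where
  carrier := {φ | ∀ f : Module.Dual K C, φ ∘ₗ ρM.smul f = lmulDual K C f ∘ₗ φ}
  add_mem' := by
    intro a b ha hb f
    simp only [LinearMap.add_comp, LinearMap.comp_add, ha f, hb f]
  zero_mem' := by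
    intro f
    simp only [LinearMap.zero_comp, LinearMap.comp_zero]
  smul_mem' := by
    intro k a ha f
    simp only [LinearMap.smul_comp, LinearMap.comp_smul, ha f]

/-- The space `Hom^C(T, ⊕ᵢ Xᵢ)` of right `C`-comodule morphisms from `T` into the direct sum
of the family `Xᵢ`, realized as the subspace of those linear maps `T → ∏ᵢ Xᵢ` that take
values in the direct sum and whose components are comodule morphisms. -/
def homIntoSumSub {ι : Type y} {X : ι → Type x} [∀ i, AddCommGroup (X i)]
    [∀ i, Module K (X i)] (ρX : ∀ i, RightComodStr K C (X i))
    {T : Type w} [AddCommGroup T] [Module K T] (ρT : RightComodStr K C T) :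
    Submodule K (T →ₗ[K] ∀ i, X i) where
  carrier := {φ | (∀ t, φ t ∈ finSupportSub (K := K) X) ∧
    ∀ i, IsRightComodHom ρT (ρX i) (LinearMap.proj i ∘ₗ φ)}
  add_mem' := by
    intro a b ha hb
    refine ⟨fun t => by simpa using add_mem (ha.1 t) (hb.1 t), fun i => ?_⟩
    have h1 : LinearMap.proj (R := K) (φ := X) i ∘ₗ (a + b)
        = LinearMap.proj i ∘ₗ a + LinearMap.proj i ∘ₗ b := by
      simp [LinearMap.comp_add]
    unfold IsRightComodHom
    rw [h1, LinearMap.rTensor_add, LinearMap.comp_add, LinearMap.add_comp,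
      ha.2 i, hb.2 i]
  zero_mem' := by
    refine ⟨fun t => by simpa using zero_mem (finSupportSub (K := K) X), fun i => ?_⟩
    have h1 : LinearMap.proj (R := K) (φ := X) i ∘ₗ (0 : T →ₗ[K] ∀ i, X i) = 0 := by
      simp
    unfold IsRightComodHom
    rw [h1]
    simp
  smul_mem' := by
    intro k a ha
    refine ⟨fun t => by simpa using Submodule.smul_mem (finSupportSub (K := K) X) k (ha.1 t), fun i => ?_⟩
    have h1 : LinearMap.proj (R := K) (φ := X) i ∘ₗ (k • a)
        = k • (LinearMap.proj i ∘ₗ a) := by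
      simp [LinearMap.comp_smul]
    unfold IsRightComodHom
    rw [h1, LinearMap.rTensor_smul, LinearMap.comp_smul, LinearMap.smul_comp, ha.2 i]

variable {M' : Type x} [AddCommGroup M'] [Module K M']

/-- transporting a left comodule structure along a surjection -/
noncomputable def LeftComodStr.ofSurj (ρ : LeftComodStr K C M) (π : M →ₗ[K] M')
    (hπ : Function.Surjective π) (ρ' : M' →ₗ[K] C ⊗[K] M')
    (hcomm : ρ' ∘ₗ π = π.lTensor C ∘ₗ ρ.ρ) : LeftComodStr K C M' where
  ρ := ρ'
  coassoc := by
    rw [← LinearMap.cancel_right hπ]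
    have n1 : (Coalgebra.comul (R := K) (A := C)).rTensor M' ∘ₗ π.lTensor C
        = π.lTensor (C ⊗[K] C) ∘ₗ (Coalgebra.comul (R := K) (A := C)).rTensor M := by
      apply TensorProduct.ext'; intro c m; simp
    have n2 : (TensorProduct.assoc K C C M').toLinearMap ∘ₗ π.lTensor (C ⊗[K] C)
        = (π.lTensor C).lTensor C ∘ₗ (TensorProduct.assoc K C C M).toLinearMap := by
      apply TensorProduct.ext_threefold; intro a b m; simp
    calc ((TensorProduct.assoc K C C M').toLinearMap ∘ₗ
            (Coalgebra.comul (R := K)).rTensor M' ∘ₗ ρ') ∘ₗ π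
        = (TensorProduct.assoc K C C M').toLinearMap ∘ₗ
            ((Coalgebra.comul (R := K)).rTensor M' ∘ₗ π.lTensor C) ∘ₗ ρ.ρ := by
          simp only [LinearMap.comp_assoc, hcomm]
      _ = ((TensorProduct.assoc K C C M').toLinearMap ∘ₗ π.lTensor (C ⊗[K] C)) ∘ₗ
            (Coalgebra.comul (R := K)).rTensor M ∘ₗ ρ.ρ := by
          rw [n1]; simp only [LinearMap.comp_assoc]
      _ = (π.lTensor C).lTensor C ∘ₗ (TensorProduct.assoc K C C M).toLinearMap ∘ₗ
            (Coalgebra.comul (R := K)).rTensor M ∘ₗ ρ.ρ := by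
          rw [n2]; simp only [LinearMap.comp_assoc]
      _ = (π.lTensor C).lTensor C ∘ₗ ρ.ρ.lTensor C ∘ₗ ρ.ρ := by rw [ρ.coassoc]
      _ = (ρ'.lTensor C ∘ₗ ρ') ∘ₗ π := by
          rw [← LinearMap.comp_assoc, ← LinearMap.lTensor_comp, ← hcomm,
            LinearMap.lTensor_comp]
          simp only [LinearMap.comp_assoc, ← hcomm]
  counit' := by
    rw [← LinearMap.cancel_right hπ]
    have n1 : ((TensorProduct.lid K M').toLinearMap ∘ₗ
          (Coalgebra.counit (R := K) (A := C)).rTensor M') ∘ₗ π.lTensor C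
        = π ∘ₗ (TensorProduct.lid K M).toLinearMap ∘ₗ
            (Coalgebra.counit (R := K) (A := C)).rTensor M := by
      apply TensorProduct.ext'; intro c m; simp
    calc ((TensorProduct.lid K M').toLinearMap ∘ₗ
            (Coalgebra.counit (R := K)).rTensor M' ∘ₗ ρ') ∘ₗ π
        = (((TensorProduct.lid K M').toLinearMap ∘ₗ
            (Coalgebra.counit (R := K)).rTensor M') ∘ₗ π.lTensor C) ∘ₗ ρ.ρ := by
          simp only [LinearMap.comp_assoc, hcomm]
      _ = π ∘ₗ (TensorProduct.lid K M).toLinearMap ∘ₗ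
            (Coalgebra.counit (R := K)).rTensor M ∘ₗ ρ.ρ := by
          rw [n1]; simp only [LinearMap.comp_assoc]
      _ = LinearMap.id ∘ₗ π := by rw [ρ.counit']; simp
  
theorem LeftComodStr.ofSurj_smul (ρ : LeftComodStr K C M) (π : M →ₗ[K] M')
    (hπ : Function.Surjective π) (ρ' : M' →ₗ[K] C ⊗[K] M')
    (hcomm : ρ' ∘ₗ π = π.lTensor C ∘ₗ ρ.ρ) (f : Module.Dual K C) :
    (ρ.ofSurj π hπ ρ' hcomm).smul f ∘ₗ π = π ∘ₗ ρ.smul f := by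
  have n1 : ((TensorProduct.lid K M').toLinearMap ∘ₗ f.rTensor M') ∘ₗ π.lTensor C
      = π ∘ₗ (TensorProduct.lid K M).toLinearMap ∘ₗ f.rTensor M := by
    apply TensorProduct.ext'; intro c m; simp
  calc (ρ.ofSurj π hπ ρ' hcomm).smul f ∘ₗ π
      = (((TensorProduct.lid K M').toLinearMap ∘ₗ f.rTensor M') ∘ₗ π.lTensor C) ∘ₗ ρ.ρ := by
        unfold LeftComodStr.smul LeftComodStr.ofSurj
        simp only [LinearMap.comp_assoc, hcomm]
    _ = π ∘ₗ ρ.smul f := by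
        rw [n1]; unfold LeftComodStr.smul; simp only [LinearMap.comp_assoc]

/-- stable subspaces of comodules are subcomodules -/
theorem LeftComodStr.isSubcomod_of_stable (ρ : LeftComodStr K C M) {s : Submodule K M}
    (hs : ∀ f, ∀ x ∈ s, ρ.smul f x ∈ s) : ρ.IsSubcomod s := by
  classical
  intro x hx
  set b := Module.Basis.ofVectorSpace K C with hb
  set E : C ⊗[K] M ≃ₗ[K] (Module.Basis.ofVectorSpaceIndex K C →₀ M) :=
    (TensorProduct.congr b.repr (LinearEquiv.refl K M)).trans
      (TensorProduct.finsuppScalarLeft K M _) with hE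
  have key : ∀ (i) (t : C ⊗[K] M),
      E t i = (TensorProduct.lid K M) ((b.coord i).rTensor M t) := by
    intro i t
    induction t with
    | zero => simp
    | add a c ha hc => simp [map_add, ha, hc]
    | tmul c m => simp [hE, Module.Basis.coord_apply]
  have hrec : ∀ g : Module.Basis.ofVectorSpaceIndex K C →₀ M,
      E.symm g = ∑ i ∈ g.support, b i ⊗ₜ[K] g i := by
    intro g
    apply E.injective
    rw [E.apply_symm_apply, map_sum]
    have hsingle : ∀ (i : Module.Basis.ofVectorSpaceIndex K C) (m : M),
        E (b i ⊗ₜ[K] m) = Finsupp.single i m := by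
      intro i m
      ext k
      rw [key k]
      by_cases h : i = k
      · subst h; simp [Module.Basis.coord_apply]
      · simp [Module.Basis.coord_apply, Finsupp.single_apply, h, Ne.symm h]
    rw [Finset.sum_congr rfl fun i _ => hsingle i (g i)]
    exact (Finsupp.sum_single g).symm
  set g := E (ρ.ρ x) with hg
  have hgmem : ∀ i, g i ∈ s := by
    intro i
    rw [hg, key i]
    exact hs (b.coord i) x hx
  refine ⟨∑ i ∈ g.support, b i ⊗ₜ[K] (⟨g i, hgmem i⟩ : ↥s), ?_⟩
  have : ρ.ρ x = E.symm g := by rw [hg, E.symm_apply_apply]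
  rw [this, hrec, map_sum]
  rfl


/-- The restriction of a right `C*`-module structure to a stable subspace. -/
noncomputable def RightModStr.restrictStr {N : Type w} [AddCommGroup N] [Module K N]
    (S : RightModStr K C N) {P : Submodule K N} (hP : S.IsStableSub P) :
    RightModStr K C ↥P where
  act f := (S.act f).restrict fun x hx => hP f x hx
  act_add f g := by
    apply LinearMap.ext; intro x; apply Subtype.ext
    simp [LinearMap.restrict_apply, S.act_add]
  act_smulK k f := by
    apply LinearMap.ext; intro x; apply Subtype.ext
    simp [LinearMap.restrict_apply, S.act_smulK]
  act_conv f g := by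
    apply LinearMap.ext; intro x; apply Subtype.ext
    simp [LinearMap.restrict_apply, S.act_conv]
  act_counit := by
    apply LinearMap.ext; intro x; apply Subtype.ext
    simp [LinearMap.restrict_apply, S.act_counit]

/-- The image of a rational module under a module map is a rational submodule. -/
theorem isRationalSub_range {N : Type w} [AddCommGroup N] [Module K N]
    {N' : Type x} [AddCommGroup N'] [Module K N']
    (S : RightModStr K C N) (S' : RightModStr K C N')
    (ρ : LeftComodStr K C N) (hcompat : ∀ f, ρ.smul f = S.act f)
    (φ : N →ₗ[K] N') (hφ : IsRightModHom S S' φ) :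
    S'.IsRationalSub (LinearMap.range φ) := by
  constructor
  · rintro f n ⟨x, rfl⟩
    exact ⟨S.act f x, LinearMap.congr_fun (hφ f) x⟩
  · -- the kernel of φ is stable, hence a subcomodule
    have hker : ∀ f, ∀ x ∈ LinearMap.ker φ, ρ.smul f x ∈ LinearMap.ker φ := by
      intro f x hx
      have h1 : φ (ρ.smul f x) = S'.act f (φ x) := by
        rw [hcompat f]
        exact LinearMap.congr_fun (hφ f) x
      simp only [LinearMap.mem_ker] at hx ⊢
      rw [h1, hx, map_zero]
    have hsub : ρ.IsSubcomod (LinearMap.ker φ) := ρ.isSubcomod_of_stable hker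
    set π : N →ₗ[K] ↥(LinearMap.range φ) := φ.rangeRestrict with hπdef
    have hπsurj : Function.Surjective π := φ.surjective_rangeRestrict
    have hkill : ∀ x ∈ LinearMap.ker φ, (π.lTensor C ∘ₗ ρ.ρ) x = 0 := by
      intro x hx
      obtain ⟨u, hu⟩ := hsub x hx
      have : π ∘ₗ (LinearMap.ker φ).subtype = 0 := by
        apply LinearMap.ext; intro y; apply Subtype.ext
        show φ ((LinearMap.ker φ).subtype y) = 0
        exact LinearMap.mem_ker.mp y.2
      rw [LinearMap.comp_apply, ← hu, ← LinearMap.comp_apply, ← LinearMap.lTensor_comp, this]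
      simp
    set ρ'' : (N ⧸ LinearMap.ker φ) →ₗ[K] C ⊗[K] ↥(LinearMap.range φ) :=
      (LinearMap.ker φ).liftQ (π.lTensor C ∘ₗ ρ.ρ) (fun x hx => hkill x hx) with hρ''
    set ρ' : ↥(LinearMap.range φ) →ₗ[K] C ⊗[K] ↥(LinearMap.range φ) :=
      ρ'' ∘ₗ (φ.quotKerEquivRange).symm.toLinearMap with hρ'
    have hcomm : ρ' ∘ₗ π = π.lTensor C ∘ₗ ρ.ρ := by
      apply LinearMap.ext; intro x
      have h1 : (φ.quotKerEquivRange).symm (π x) = Submodule.Quotient.mk x := by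
        apply (φ.quotKerEquivRange).injective
        rw [LinearEquiv.apply_symm_apply]
        apply Subtype.ext
        simp [LinearMap.quotKerEquivRange_apply_mk, hπdef]
      simp only [LinearMap.comp_apply, hρ', LinearEquiv.coe_coe, h1, hρ'',
        Submodule.liftQ_apply]
      rfl
    set ρR := ρ.ofSurj π hπsurj ρ' hcomm with hρR
    refine ⟨ρR, fun f p => ?_⟩
    obtain ⟨x, rfl⟩ := hπsurj p
    have h2 : ρR.smul f (π x) = π (ρ.smul f x) :=
      LinearMap.congr_fun (ρ.ofSurj_smul π hπsurj ρ' hcomm f) x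
    rw [h2]
    show φ (ρ.smul f x) = S'.act f (φ x)
    rw [hcompat f]
    exact LinearMap.congr_fun (hφ f) x

theorem isRationalSub_le_rat {N : Type w} [AddCommGroup N] [Module K N]
    (S : RightModStr K C N) {P : Submodule K N} (h : S.IsRationalSub P) : P ≤ S.rat :=
  le_sSup h

/-- image of a rational submodule under a module hom lands in the rational part -/
theorem map_isRationalSub_le_rat {N : Type w} [AddCommGroup N] [Module K N]
    {N' : Type x} [AddCommGroup N'] [Module K N']
    (S : RightModStr K C N) (S' : RightModStr K C N')
    (φ : N →ₗ[K] N') (hφ : IsRightModHom S S' φ)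
    {P : Submodule K N} (hP : S.IsRationalSub P) : P.map φ ≤ S'.rat := by
  obtain ⟨hstab, ρ, hcomp⟩ := hP
  have hrange : S'.IsRationalSub (LinearMap.range (φ ∘ₗ P.subtype)) := by
    refine isRationalSub_range (S.restrictStr hstab) S' ρ ?_ (φ ∘ₗ P.subtype) ?_
    · intro f
      apply LinearMap.ext; intro p; apply Subtype.ext
      exact hcomp f p
    · intro f
      apply LinearMap.ext; intro p
      have := LinearMap.congr_fun (hφ f) (p : N)
      simpa [RightModStr.restrictStr, LinearMap.restrict_apply] using this
  have : LinearMap.range (φ ∘ₗ P.subtype) = P.map φ := by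
    rw [LinearMap.range_comp, Submodule.range_subtype]
  rw [← this]
  exact le_sSup hrange

theorem mem_rat_map {N : Type w} [AddCommGroup N] [Module K N]
    {N' : Type x} [AddCommGroup N'] [Module K N']
    (S : RightModStr K C N) (S' : RightModStr K C N')
    (φ : N →ₗ[K] N') (hφ : IsRightModHom S S' φ)
    {x : N} (hx : x ∈ S.rat) : φ x ∈ S'.rat := by
  have h2 : (S.rat).map φ ≤ S'.rat := by
    rw [RightModStr.rat, sSup_eq_iSup', Submodule.map_iSup]
    exact iSup_le fun P => map_isRationalSub_le_rat S S' φ hφ P.2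
  exact h2 (Submodule.mem_map_of_mem hx)


theorem IsRightModHom.compHom {N₁ : Type w} [AddCommGroup N₁] [Module K N₁]
    {N₂ : Type x} [AddCommGroup N₂] [Module K N₂]
    {N₃ : Type y} [AddCommGroup N₃] [Module K N₃]
    {S₁ : RightModStr K C N₁} {S₂ : RightModStr K C N₂} {S₃ : RightModStr K C N₃}
    {φ : N₁ →ₗ[K] N₂} {ψ : N₂ →ₗ[K] N₃}
    (hφ : IsRightModHom S₁ S₂ φ) (hψ : IsRightModHom S₂ S₃ ψ) :
    IsRightModHom S₁ S₃ (ψ ∘ₗ φ) := by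
  intro f
  rw [LinearMap.comp_assoc, hφ f, ← LinearMap.comp_assoc, hψ f, LinearMap.comp_assoc]

theorem conv_apply_smul (g f : Module.Dual K C) (c : C) :
    conv K C g f c = g ((Cright K C).smul f c) := by
  have key : (TensorProduct.lid K K).toLinearMap ∘ₗ TensorProduct.map g f
      = g ∘ₗ (TensorProduct.rid K C).toLinearMap ∘ₗ f.lTensor C := by
    apply TensorProduct.ext'; intro a d
    simp [mul_comm]
  have h := LinearMap.congr_fun key (Coalgebra.comul (R := K) c)
  simpa [conv, Cright, RightComodStr.smul] using h


variable (K C)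

set_option maxHeartbeats 2000000 in
/-- **Corollary 2.2.** Suppose `C ≅ Rat(C*)` as right `C*`-modules (action
`c ↼ f = ∑ f(c₁) c₂` on `C`, right multiplication on `C*`). Let `C = ⊕_{j ∈ J} E j` be a
decomposition of `C` as a direct sum of right `C`-comodules, where each `E j` is an
injective envelope of a simple right subcomodule `T j`, and let
`J₀ = {j | Rat((E j)*) ≠ 0}`. Then `C ≅ Rat(∏_{j ∈ J₀} (E j)*)` as right `C*`-modules
(equivalently as left `C`-comodules). -/
theorem rat_iso_of_rat_iso_right_restricted_product
    (hC : ∃ e : C ≃ₗ[K] ↥((dualRightReg K C).rat),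
      ∀ (f : Module.Dual K C) (c : C),
        (e ((Cleft K C).smul f c) : Module.Dual K C) = conv K C (e c) f)
    {J : Type y} (T E : J → Submodule K C)
    (hT : ∀ j, (Cright K C).IsSimpleSubcomod (T j))
    (hEsub : ∀ j, (Cright K C).IsSubcomod (E j))
    (hTE : ∀ j, T j ≤ E j)
    (hEinj : ∀ j, (Cright K C).IsInjectiveSubcomod (E j))
    (hEess : ∀ j, ∀ t : Submodule K C, (Cright K C).IsSubcomod t → t ≤ E j → t ≠ ⊥ →
      T j ⊓ t ≠ ⊥)
    (hindep : iSupIndep E) (hsup : ⨆ j, E j = ⊤) :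
    ∃ e : C ≃ₗ[K]
        ↥((piRightModStr (fun j : {j : J // ((Cright K C).subDualModStr (hEsub j)).rat ≠ ⊥} =>
            (Cright K C).subDualModStr (hEsub j.1))).rat),
      ∀ (f : Module.Dual K C) (c : C)
        (j : {j : J // ((Cright K C).subDualModStr (hEsub j)).rat ≠ ⊥}),
        (e ((Cleft K C).smul f c) :
            ∀ j' : {j : J // ((Cright K C).subDualModStr (hEsub j)).rat ≠ ⊥},
              Module.Dual K ↥(E j'.1)) j
          = ((Cright K C).subDualModStr (hEsub j.1)).act f
              ((e c : ∀ j' : {j : J // ((Cright K C).subDualModStr (hEsub j)).rat ≠ ⊥},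
                Module.Dual K ↥(E j'.1)) j) := by
  classical
  set P : J → Prop := fun j => ((Cright K C).subDualModStr (hEsub j)).rat ≠ ⊥ with hP
  set Sj : (j : J) → RightModStr K C (Module.Dual K ↥(E j)) :=
    fun j => (Cright K C).subDualModStr (hEsub j) with hSj
  set SJ := piRightModStr (fun j : J => Sj j) with hSJ
  set S0 := piRightModStr (fun j : {j : J // P j} => Sj j.1) with hS0
  set SC := (Cleft K C).toRightModStr with hSC
  set SD := dualRightReg K C with hSD
  obtain ⟨e, he⟩ := hC
  set χ : C →ₗ[K] Module.Dual K C :=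
    ((dualRightReg K C).rat).subtype ∘ₗ (e : C →ₗ[K] ↥((dualRightReg K C).rat)) with hχdef
  have hχ : IsRightModHom SC SD χ := by
    intro f
    apply LinearMap.ext; intro c
    show ((e ((Cleft K C).smul f c) : Module.Dual K C)) = conv K C ((e c : Module.Dual K C)) f
    exact he f c
  have hχinj : Function.Injective χ := by
    intro c₁ c₂ h
    exact e.injective (Subtype.ext h)
  set Φ : Module.Dual K C →ₗ[K] ∀ j : J, Module.Dual K ↥(E j) :=
    LinearMap.pi (fun j : J => ((E j).subtype).dualMap) with hΦdef
  have hΦ : IsRightModHom SD SJ Φ := by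
    intro f
    apply LinearMap.ext; intro g
    funext j
    apply LinearMap.ext; intro m
    show conv K C g f (m : C) = (Φ g j) ((Cright K C).subSmul (hEsub j) f m)
    rw [conv_apply_smul]
    rfl
  have hΦinj : Function.Injective Φ := by
    intro g₁ g₂ hgg
    have hk : ⊤ ≤ LinearMap.ker (g₁ - g₂) := by
      rw [← hsup]
      apply iSup_le
      intro j x hx
      have h1 : Φ g₁ j ⟨x, hx⟩ = Φ g₂ j ⟨x, hx⟩ := by rw [hgg]
      have h2 : g₁ x = g₂ x := h1
      simp [LinearMap.mem_ker, LinearMap.sub_apply, h2]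
    have h0 : g₁ - g₂ = 0 := LinearMap.ker_eq_top.mp (top_le_iff.mp hk)
    exact sub_eq_zero.mp h0
  have hint : DirectSum.IsInternal E :=
    (DirectSum.isInternal_submodule_iff_iSupIndep_and_iSup_eq_top E).mpr ⟨hindep, hsup⟩
  set eqv := LinearEquiv.ofBijective (DirectSum.coeLinearMap E) hint with heqv
  have hΦsurj : Function.Surjective Φ := by
    intro α
    refine ⟨(DirectSum.toModule K J K (fun j => α j)) ∘ₗ eqv.symm.toLinearMap, ?_⟩
    funext j
    apply LinearMap.ext; intro m
    have h1 : eqv.symm (m : C) = DirectSum.lof K J (fun j => ↥(E j)) j m := by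
      apply eqv.injective
      rw [LinearEquiv.apply_symm_apply]
      show (m : C) = eqv (DirectSum.lof K J (fun j => ↥(E j)) j m)
      show (m : C) = DirectSum.coeLinearMap E (DirectSum.lof K J (fun j => ↥(E j)) j m)
      rw [DirectSum.lof_eq_of, DirectSum.coeLinearMap_of]
    show (DirectSum.toModule K J K fun j => α j) (eqv.symm (m : C)) = α j m
    rw [h1, DirectSum.toModule_lof]
  have hθfull : IsRightModHom SC SJ (Φ ∘ₗ χ) := IsRightModHom.compHom hχ hΦ
  have hCrat : ∀ f, (Cleft K C).smul f = SC.act f := fun f => rfl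
  have hprj : ∀ j : J, IsRightModHom SJ (Sj j) (LinearMap.proj j) := by
    intro j f
    exact LinearMap.proj_pi _ j
  have hψ0 : ∀ (j : J), ¬ P j → ∀ c : C, Φ (χ c) j = 0 := by
    intro j hj c
    have hr : (Sj j).IsRationalSub (LinearMap.range (LinearMap.proj j ∘ₗ Φ ∘ₗ χ)) :=
      isRationalSub_range SC (Sj j) (Cleft K C) hCrat _
        (IsRightModHom.compHom hθfull (hprj j))
    have hle : LinearMap.range (LinearMap.proj j ∘ₗ Φ ∘ₗ χ) ≤ (Sj j).rat := le_sSup hr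
    have hbot : (Sj j).rat = ⊥ := by
      by_contra hne
      exact hj hne
    have : (LinearMap.proj j ∘ₗ Φ ∘ₗ χ) c ∈ (⊥ : Submodule K (Module.Dual K ↥(E j))) := by
      rw [← hbot]
      exact hle ⟨c, rfl⟩
    simpa using this
  set r : (∀ j : J, Module.Dual K ↥(E j)) →ₗ[K] ∀ j : {j : J // P j}, Module.Dual K ↥(E j.1) :=
    LinearMap.pi (fun j : {j : J // P j} => LinearMap.proj j.1) with hrdef
  have hrhom : IsRightModHom SJ S0 r := by
    intro f
    apply LinearMap.ext; intro y
    funext j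
    rfl
  set θ : C →ₗ[K] ∀ j : {j : J // P j}, Module.Dual K ↥(E j.1) := r ∘ₗ Φ ∘ₗ χ with hθdef
  have hθ : IsRightModHom SC S0 θ := IsRightModHom.compHom hθfull hrhom
  have hθinj : Function.Injective θ := by
    intro c₁ c₂ hcc
    apply hχinj
    apply hΦinj
    funext j
    by_cases h : P j
    · exact congrFun hcc ⟨j, h⟩
    · rw [hψ0 j h c₁, hψ0 j h c₂]
  set z : (∀ j : {j : J // P j}, Module.Dual K ↥(E j.1)) →ₗ[K] ∀ j : J, Module.Dual K ↥(E j) :=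
    LinearMap.pi (fun j : J => if h : P j then
      (LinearMap.proj (⟨j, h⟩ : {j : J // P j}) :
        (∀ i : {j : J // P j}, Module.Dual K ↥(E i.1)) →ₗ[K] Module.Dual K ↥(E j)) else 0)
    with hzdef
  have hzap : ∀ (y : ∀ j : {j : J // P j}, Module.Dual K ↥(E j.1)) (j : J) (h : P j),
      z y j = y ⟨j, h⟩ := by
    intro y j h
    rw [hzdef]
    simp only [LinearMap.pi_apply, dif_pos h]
    rfl
  have hzap0 : ∀ (y : ∀ j : {j : J // P j}, Module.Dual K ↥(E j.1)) (j : J), ¬ P j →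
      z y j = 0 := by
    intro y j h
    rw [hzdef]
    simp only [LinearMap.pi_apply, dif_neg h]
    rfl
  have hzhom : IsRightModHom S0 SJ z := by
    intro f
    apply LinearMap.ext; intro y
    funext j
    show z (S0.act f y) j = SJ.act f (z y) j
    have hact : SJ.act f (z y) j = (Sj j).act f (z y j) := rfl
    by_cases h : P j
    · rw [hzap _ _ h, hact, hzap _ _ h]
      rfl
    · rw [hzap0 _ _ h, hact, hzap0 _ _ h]
      simp
  set ΦE := LinearEquiv.ofBijective Φ ⟨hΦinj, hΦsurj⟩ with hΦE
  have hΨ : IsRightModHom SJ SD (ΦE.symm : (∀ j : J, Module.Dual K ↥(E j)) →ₗ[K] _) := by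
    intro f
    apply LinearMap.ext; intro y
    apply hΦinj
    show Φ (ΦE.symm (SJ.act f y)) = Φ (SD.act f (ΦE.symm y))
    have h2 : Φ (SD.act f (ΦE.symm y)) = SJ.act f y := by
      have h3 := LinearMap.congr_fun (hΦ f) (ΦE.symm y)
      simp only [LinearMap.comp_apply] at h3
      rw [h3]
      show SJ.act f (ΦE (ΦE.symm y)) = SJ.act f y
      rw [ΦE.apply_symm_apply]
    rw [h2]
    show ΦE (ΦE.symm _) = _
    rw [ΦE.apply_symm_apply]
  have hsurjrat : ∀ x ∈ S0.rat, ∃ c : C, θ c = x := by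
    intro x hx
    have h1 : z x ∈ SJ.rat := mem_rat_map S0 SJ z hzhom hx
    have h2 : ΦE.symm (z x) ∈ SD.rat := mem_rat_map SJ SD
      (ΦE.symm : (∀ j : J, Module.Dual K ↥(E j)) →ₗ[K] _) hΨ h1
    refine ⟨e.symm ⟨ΦE.symm (z x), h2⟩, ?_⟩
    have h3 : χ (e.symm ⟨ΦE.symm (z x), h2⟩) = ΦE.symm (z x) := by
      show ((e (e.symm ⟨ΦE.symm (z x), h2⟩) : Module.Dual K C)) = ΦE.symm (z x)
      rw [e.apply_symm_apply]
    have h4 : Φ (ΦE.symm (z x)) = z x := by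
      show ΦE (ΦE.symm (z x)) = z x
      exact ΦE.apply_symm_apply _
    funext j
    show (Φ (χ (e.symm ⟨ΦE.symm (z x), h2⟩))) j.1 = x j
    rw [h3, h4]
    exact hzap x j.1 j.2
  have hratrange : S0.IsRationalSub (LinearMap.range θ) :=
    isRationalSub_range SC S0 (Cleft K C) hCrat θ hθ
  have hrle : LinearMap.range θ ≤ S0.rat := le_sSup hratrange
  have hmem : ∀ c : C, θ c ∈ S0.rat := fun c => hrle (LinearMap.mem_range_self θ c)
  set θ' : C →ₗ[K] ↥(S0.rat) := θ.codRestrict S0.rat hmem with hθ'def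
  have hbij : Function.Bijective θ' := by
    constructor
    · intro c₁ c₂ h
      exact hθinj (congrArg Subtype.val h)
    · intro y
      obtain ⟨c, hc⟩ := hsurjrat y.1 y.2
      exact ⟨c, Subtype.ext hc⟩
  refine ⟨LinearEquiv.ofBijective θ' hbij, ?_⟩
  intro f c j
  have h : θ ((Cleft K C).smul f c) = S0.act f (θ c) := LinearMap.congr_fun (hθ f) c
  show θ ((Cleft K C).smul f c) j = (Sj j.1).act f (θ c j)
  rw [h]
  rfl


end CoFrob
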